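/- The α-contraction of the Möbius function satisfies: μ_α(n) = μ(n) if n ≡ 1 or 3 (mod 4), μ_α(n) = μ(n/2) if n ≡ 0 (mod 4), and μ_α(n) = 0 if n ≡ 2 (mod 4). Moreover, μ_α is multiplicative. -/

import Mathlib

/-!
The shift `(a, b) ↦ (b, a + b)` permutes the finite set `(ℤ/m)²`, so it has finite order `k`,
and then `m ∣ F_k`: the rank of apparition `α(m)` exists. Since `gcd (F_a) (F_b) = F_(gcd a b)`,
`m ∣ F_k ↔ α(m) ∣ k`. Grouping the divisors of `F_n` by their rank of apparition therefore gives
`∑_{d ∣ n} μ_α(d) = ∑_{m ∣ F_n} μ(m) = [F_n = 1] = [n ∣ 2]`, and Möbius inversion yields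
`μ_α = μ * 1_{· ∣ 2}`: a product of multiplicative functions, equal to `μ(n) + [2 ∣ n] μ(n / 2)`.
-/

open Finset

noncomputable def fibAlpha (n : ℕ) : ℕ := sInf {m | 0 < m ∧ n ∣ Nat.fib m}

def fibStep (m : ℕ) : Equiv.Perm (ZMod m × ZMod m) where
  toFun x := (x.2, x.1 + x.2)
  invFun x := (x.2 - x.1, x.1)
  left_inv x := by simp
  right_inv x := by simp

lemma fibStep_pow_apply (m k : ℕ) :
    (fibStep m ^ k) (0, 1) = ((Nat.fib k : ZMod m), (Nat.fib (k + 1) : ZMod m)) := by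
  induction k with
  | zero => simp
  | succ k ih =>
    rw [pow_succ', Equiv.Perm.mul_apply, ih]
    simp [fibStep, Nat.fib_add_two]

lemma exists_pos_dvd_fib {m : ℕ} (hm : m ≠ 0) : ∃ k, 0 < k ∧ m ∣ Nat.fib k := by
  have : NeZero m := ⟨hm⟩
  refine ⟨orderOf (fibStep m), orderOf_pos _, ?_⟩
  have h := fibStep_pow_apply m (orderOf (fibStep m))
  rw [pow_orderOf_eq_one, Equiv.Perm.one_apply] at h
  exact (ZMod.natCast_eq_zero_iff _ _).mp (congrArg Prod.fst h).symm

lemma fibAlpha_pos_and_dvd_fib {m : ℕ} (hm : m ≠ 0) :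
    0 < fibAlpha m ∧ m ∣ Nat.fib (fibAlpha m) :=
  Nat.sInf_mem (exists_pos_dvd_fib hm)

lemma dvd_fib_iff_fibAlpha_dvd {m : ℕ} (hm : m ≠ 0) (k : ℕ) :
    m ∣ Nat.fib k ↔ fibAlpha m ∣ k := by
  obtain ⟨hpos, hdvd⟩ := fibAlpha_pos_and_dvd_fib hm
  refine ⟨fun h => ?_, fun h => hdvd.trans (Nat.fib_dvd _ _ h)⟩
  have hgcd : m ∣ Nat.fib (Nat.gcd (fibAlpha m) k) := by
    rw [Nat.fib_gcd]
    exact Nat.dvd_gcd hdvd h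
  have hle : fibAlpha m ≤ Nat.gcd (fibAlpha m) k :=
    Nat.sInf_le ⟨Nat.gcd_pos_of_pos_left _ hpos, hgcd⟩
  rw [← Nat.gcd_eq_left_iff_dvd]
  exact le_antisymm (Nat.le_of_dvd hpos (Nat.gcd_dvd_left _ _)) hle

lemma Nat.fib_eq_one_iff {n : ℕ} : Nat.fib n = 1 ↔ n = 1 ∨ n = 2 := by
  refine ⟨fun h => ?_, by rintro (rfl | rfl) <;> rfl⟩
  have h0 : n ≠ 0 := by rintro rfl; simp at h
  have h2 : ¬ 2 < n := fun h2 => by simpa [h] using (Nat.fib_lt_fib le_rfl).mpr h2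
  omega

/-- The α-contraction of an arithmetic function: `f_α(n) = ∑_{m : α m = n} f m`;
all such `m` lie in `Icc 1 (fib n)`. -/
noncomputable def alphaCon (f : ℕ → ℤ) (n : ℕ) : ℤ :=
  ∑ m ∈ (Icc 1 (Nat.fib n)).filter (fun m => fibAlpha m = n), f m

lemma sum_divisors_alphaCon (f : ℕ → ℤ) {n : ℕ} (hn : n ≠ 0) :
    ∑ d ∈ n.divisors, alphaCon f d = ∑ m ∈ (Nat.fib n).divisors, f m := by
  have hfib : Nat.fib n ≠ 0 := Nat.fib_eq_zero.not.mpr hn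
  have maps : ∀ m ∈ (Nat.fib n).divisors, fibAlpha m ∈ n.divisors := by
    intro m hm
    have hm0 : m ≠ 0 := Nat.ne_of_gt (Nat.pos_of_mem_divisors hm)
    simpa [hn, ← dvd_fib_iff_fibAlpha_dvd hm0] using Nat.dvd_of_mem_divisors hm
  have fiber : ∀ d ∈ n.divisors, (Icc 1 (Nat.fib d)).filter (fun m => fibAlpha m = d)
      = (Nat.fib n).divisors.filter (fun m => fibAlpha m = d) := by
    intro d hd
    ext m
    simp only [mem_filter, mem_Icc, Nat.mem_divisors, and_congr_left_iff]
    rintro rfl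
    constructor
    · rintro ⟨hm, -⟩
      exact ⟨(dvd_fib_iff_fibAlpha_dvd (by omega) n).mpr (Nat.dvd_of_mem_divisors hd), hfib⟩
    · rintro ⟨hdvd, -⟩
      have hm0 : m ≠ 0 := by rintro rfl; exact hfib (zero_dvd_iff.mp hdvd)
      obtain ⟨hpos, hfibα⟩ := fibAlpha_pos_and_dvd_fib hm0
      exact ⟨Nat.one_le_iff_ne_zero.mpr hm0, Nat.le_of_dvd (Nat.fib_pos.mpr hpos) hfibα⟩
  rw [← sum_fiberwise_of_maps_to maps]
  exact sum_congr rfl fun d hd => by rw [alphaCon, fiber d hd]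

open ArithmeticFunction
open scoped ArithmeticFunction.Moebius ArithmeticFunction.zeta

namespace ArithmeticFunction

variable {R : Type*}

variable (R) in
def divisorIndicator [Zero R] [One R] (N : ℕ) : ArithmeticFunction R :=
  ⟨fun n => if n ∈ N.divisors then 1 else 0, by simp⟩

@[simp]
lemma divisorIndicator_apply [Zero R] [One R] (N n : ℕ) :
    divisorIndicator R N n = if n ∈ N.divisors then 1 else 0 := rfl

lemma isMultiplicative_divisorIndicator [MonoidWithZero R] {N : ℕ} (hN : N ≠ 0) :
    IsMultiplicative (divisorIndicator R N) := by
  refine ⟨by simp [hN], fun {m n} hmn => ?_⟩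
  have hdvd : m * n ∣ N ↔ m ∣ N ∧ n ∣ N :=
    ⟨fun h => ⟨(dvd_mul_right m n).trans h, (dvd_mul_left n m).trans h⟩,
      fun h => hmn.mul_dvd_of_dvd_of_dvd h.1 h.2⟩
  simp only [divisorIndicator_apply, Nat.mem_divisors, ne_eq, hN, not_false_eq_true, and_true,
    hdvd, ite_zero_mul_ite_zero, mul_one]

lemma moebius_mul_divisorIndicator_apply (N n : ℕ) :
    (μ * divisorIndicator ℤ N) n = ∑ d ∈ n.divisors ∩ N.divisors, μ (n / d) := by
  rw [mul_apply, Nat.sum_divisorsAntidiagonal' (f := fun a b => μ a * divisorIndicator ℤ N b)]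
  simp only [divisorIndicator_apply, mul_ite, mul_one, mul_zero]
  rw [sum_ite_mem]

end ArithmeticFunction

noncomputable def moebiusAlpha : ArithmeticFunction ℤ :=
  ⟨alphaCon (fun m => μ m), by simp [alphaCon]⟩

@[simp]
lemma moebiusAlpha_apply (n : ℕ) : moebiusAlpha n = alphaCon (fun m => μ m) n := rfl

lemma moebiusAlpha_mul_zeta : moebiusAlpha * ζ = divisorIndicator ℤ 2 := by
  ext n
  rw [coe_mul_zeta_apply]
  rcases eq_or_ne n 0 with rfl | hn
  · simp
  have hμζ : ∑ m ∈ (Nat.fib n).divisors, μ m = (μ * ζ : ArithmeticFunction ℤ) (Nat.fib n) :=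
    coe_mul_zeta_apply.symm
  simp [sum_divisors_alphaCon _ hn, hμζ, moebius_mul_coe_zeta, one_apply, Nat.fib_eq_one_iff,
    Nat.dvd_prime Nat.prime_two]

lemma moebiusAlpha_eq : moebiusAlpha = μ * divisorIndicator ℤ 2 := by
  rw [← moebiusAlpha_mul_zeta, mul_comm _ (ζ : ArithmeticFunction ℤ), ← mul_assoc,
    moebius_mul_coe_zeta, one_mul]

lemma isMultiplicative_moebiusAlpha : IsMultiplicative moebiusAlpha := by
  rw [moebiusAlpha_eq]
  exact isMultiplicative_moebius.mul (isMultiplicative_divisorIndicator two_ne_zero)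

lemma alphaCon_moebius {n : ℕ} (hn : n ≠ 0) :
    alphaCon (fun m => μ m) n = μ n + if 2 ∣ n then μ (n / 2) else 0 := by
  rw [← moebiusAlpha_apply, moebiusAlpha_eq, moebius_mul_divisorIndicator_apply, inter_comm,
    ← sum_ite_mem, Nat.prime_two.divisors, sum_pair (by decide)]
  simp [hn]

lemma moebius_eq_zero_of_four_dvd {n : ℕ} (h : 4 ∣ n) : μ n = 0 :=
  moebius_eq_zero_of_not_squarefree fun hsq =>
    absurd (Nat.isUnit_iff.mp (hsq 2 h)) (by norm_num)

lemma moebius_two_mul {k : ℕ} (hk : Odd k) : μ (2 * k) = -μ k := by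
  rw [isMultiplicative_moebius.map_mul_of_coprime (Nat.coprime_two_left.mpr hk),
    moebius_apply_prime Nat.prime_two, neg_one_mul]

theorem moebius_alphaCon :
    (∀ n : ℕ, 0 < n →
        ((n % 4 = 1 ∨ n % 4 = 3) →
            alphaCon (fun m => ArithmeticFunction.moebius m) n = ArithmeticFunction.moebius n) ∧
        (n % 4 = 0 →
            alphaCon (fun m => ArithmeticFunction.moebius m) n =
              ArithmeticFunction.moebius (n / 2)) ∧
        (n % 4 = 2 → alphaCon (fun m => ArithmeticFunction.moebius m) n = 0)) ∧
    alphaCon (fun m => ArithmeticFunction.moebius m) 1 = 1 ∧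
    ∀ m n : ℕ, Nat.Coprime m n →
      alphaCon (fun k => ArithmeticFunction.moebius k) (m * n) =
        alphaCon (fun k => ArithmeticFunction.moebius k) m *
          alphaCon (fun k => ArithmeticFunction.moebius k) n := by
  refine ⟨fun n hn => ⟨fun h => ?_, fun h => ?_, fun h => ?_⟩, ?_, fun m n hmn => ?_⟩
  · rw [alphaCon_moebius hn.ne', if_neg (by omega), add_zero]
  · rw [alphaCon_moebius hn.ne', if_pos (by omega), moebius_eq_zero_of_four_dvd (by omega),
      zero_add]
  · obtain ⟨k, rfl⟩ : 2 ∣ n := by omega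
    rw [alphaCon_moebius hn.ne', if_pos (dvd_mul_right 2 k), Nat.mul_div_cancel_left k two_pos,
      moebius_two_mul (Nat.odd_iff.mpr (by omega)), neg_add_cancel]
  · rw [← moebiusAlpha_apply, isMultiplicative_moebiusAlpha.map_one]
  · simpa only [moebiusAlpha_apply] using isMultiplicative_moebiusAlpha.map_mul_of_coprime hmn
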